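/- Let h : ℝ → ℝ be a twice continuously differentiable 2π-periodic function with h'' + h ≥ 0 everywhere, and let K = {x ∈ ℝ² : ⟨x, (cos θ, sin θ)⟩ ≤ h(θ) for all θ} be the convex body with support function h. Then the area of K is given by vol(K) = (1/2) ∫₀^{2π} h(θ)·(h''(θ) + h(θ)) dθ. -/

import Mathlib

/-!
Write `u(θ) = (cos θ, sin θ)`. The boundary of `K` is traced by `γ(θ) = h(θ) u(θ) + h'(θ) u'(θ)`,
whose velocity is `R(θ) u'(θ)`. Hence `θ ↦ ⟨γ(θ), u(φ)⟩` increases on `[φ - π, φ]` and decreases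
on `[φ, φ + π]`, so its maximum is `h(φ)`, attained at `θ = φ`; in particular `γ(θ) ∈ K`.
Translating `K` by `-γ(0)` replaces `h` by `h - ⟨γ(0), u⟩ ≥ 0` and changes neither side: the
subtracted term solves `y'' + y = 0`, so it integrates to zero against `R`. Now `K \ {0}` is the
image of `(0, 1] × [0, 2π)` under `(t, θ) ↦ t γ(θ)`, whose Jacobian is `t R(θ) h(θ)`. The map is
injective where the Jacobian does not vanish, so the change of variables formula gives
`vol K = ∫∫ t R(θ) h(θ) dt dθ = ½ ∫ h R`.
-/

open MeasureTheory Real Set Filter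

noncomputable def unitVec (θ : ℝ) : EuclideanSpace ℝ (Fin 2) :=
  (WithLp.equiv 2 (Fin 2 → ℝ)).symm ![Real.cos θ, Real.sin θ]

theorem LinearMap.det_prod_self {R : Type*} [CommRing R] (L : R × R →ₗ[R] R × R) :
    L.det = (L (1, 0)).1 * (L (0, 1)).2 - (L (0, 1)).1 * (L (1, 0)).2 := by
  rw [← LinearMap.det_toMatrix (Module.Basis.finTwoProd R), Matrix.det_fin_two]
  simp [LinearMap.toMatrix_apply]

theorem Function.Periodic.deriv {𝕜 F : Type*} [NontriviallyNormedField 𝕜] [NormedAddCommGroup F]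
    [NormedSpace 𝕜 F] {f : 𝕜 → F} {c : 𝕜} (hf : Function.Periodic f c) :
    Function.Periodic (deriv f) c := fun x => by
  rw [← deriv_comp_add_const, hf.funext]

lemma setLIntegral_Ioc_prod_Ico_ofReal_mul {f : ℝ → ℝ} (hf : Continuous f) (hf0 : ∀ x, 0 ≤ f x)
    {a : ℝ} (ha : 0 ≤ a) :
    ∫⁻ p in Ioc 0 1 ×ˢ Ico 0 a, ENNReal.ofReal (p.1 * f p.2) =
      ENNReal.ofReal ((1 / 2) * ∫ x in 0..a, f x) := by
  have h₁ : ∫⁻ t in Ioc (0 : ℝ) 1, ENNReal.ofReal t = ENNReal.ofReal (1 / 2) := by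
    have hint : IntegrableOn (fun t : ℝ => t) (Ioc 0 1) :=
      continuous_id'.integrableOn_Icc.mono_set Ioc_subset_Icc_self
    rw [← ofReal_integral_eq_lintegral_ofReal hint
      ((ae_restrict_mem measurableSet_Ioc).mono fun t ht => ht.1.le),
      ← intervalIntegral.integral_of_le zero_le_one, integral_id]
    norm_num
  have h₂ : ∫⁻ x in Ico 0 a, ENNReal.ofReal (f x) = ENNReal.ofReal (∫ x in 0..a, f x) := by
    rw [← ofReal_integral_eq_lintegral_ofReal (hf.integrableOn_Icc.mono_set Ico_subset_Icc_self)
      (Filter.Eventually.of_forall hf0), integral_Ico_eq_integral_Ioc,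
      intervalIntegral.integral_of_le ha]
  simp_rw [ENNReal.ofReal_mul' (hf0 _)]
  rw [Measure.volume_eq_prod, ← Measure.prod_restrict,
    lintegral_prod_mul (f := fun t => ENNReal.ofReal t) (g := fun x => ENNReal.ofReal (f x))
      (by fun_prop) (by fun_prop), h₁, h₂,
    ENNReal.ofReal_mul (by norm_num)]

namespace SupportFunction

noncomputable section

def proj (φ : ℝ) (p : ℝ × ℝ) : ℝ := p.1 * cos φ + p.2 * sin φ

def supportSet (g : ℝ → ℝ) : Set (ℝ × ℝ) := {p | ∀ θ, proj θ p ≤ g θ}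

def curvatureRadius (g : ℝ → ℝ) (θ : ℝ) : ℝ := deriv (deriv g) θ + g θ

-- `g(θ) u(θ) + g'(θ) u'(θ)` with `u(θ) = (cos θ, sin θ)`: the boundary point with normal `u(θ)`
def boundaryPoint (g : ℝ → ℝ) (θ : ℝ) : ℝ × ℝ :=
  (g θ * cos θ - deriv g θ * sin θ, g θ * sin θ + deriv g θ * cos θ)

def polarMap (g : ℝ → ℝ) (p : ℝ × ℝ) : ℝ × ℝ := p.1 • boundaryPoint g p.2

def polarMapDeriv (g : ℝ → ℝ) (p : ℝ × ℝ) : ℝ × ℝ →L[ℝ] ℝ × ℝ :=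
  p.1 • (ContinuousLinearMap.snd ℝ ℝ ℝ).smulRight (curvatureRadius g p.2 • (-sin p.2, cos p.2)) +
    (ContinuousLinearMap.fst ℝ ℝ ℝ).smulRight (boundaryPoint g p.2)

end

lemma proj_smul (φ t : ℝ) (p : ℝ × ℝ) : proj φ (t • p) = t * proj φ p := by
  simp only [proj, Prod.smul_fst, Prod.smul_snd, smul_eq_mul]; ring

lemma proj_add (φ : ℝ) (p q : ℝ × ℝ) : proj φ (p + q) = proj φ p + proj φ q := by
  simp only [proj, Prod.fst_add, Prod.snd_add]; ring

lemma continuous_proj (p : ℝ × ℝ) : Continuous fun φ => proj φ p := by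
  unfold proj; fun_prop

lemma abs_proj_le (φ : ℝ) (p : ℝ × ℝ) : |proj φ p| ≤ |p.1| + |p.2| := by
  refine (abs_add_le _ _).trans (add_le_add ?_ ?_) <;> rw [abs_mul] <;>
    exact mul_le_of_le_one_right (abs_nonneg _) (by first
      | exact abs_cos_le_one φ
      | exact abs_sin_le_one φ)

lemma exists_proj_pos {p : ℝ × ℝ} (hp : p ≠ 0) : ∃ φ, 0 < proj φ p := by
  set z : ℂ := ⟨p.1, p.2⟩
  have hz : z ≠ 0 := fun h => hp (Prod.ext (congrArg Complex.re h) (congrArg Complex.im h))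
  refine ⟨Complex.arg z, ?_⟩
  have hc : ‖z‖ * cos (Complex.arg z) = p.1 := Complex.norm_mul_cos_arg z
  have hs : ‖z‖ * sin (Complex.arg z) = p.2 := Complex.norm_mul_sin_arg z
  have : proj (Complex.arg z) p = ‖z‖ := by
    rw [proj, ← hc, ← hs]; linear_combination ‖z‖ * sin_sq_add_cos_sq (Complex.arg z)
  exact this ▸ norm_pos_iff.mpr hz

lemma proj_periodic (c : ℝ × ℝ) : Function.Periodic (fun θ => proj θ c) (2 * π) := fun θ => by
  simp only [proj, cos_add_two_pi, sin_add_two_pi]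

lemma proj_add_pi (θ : ℝ) (c : ℝ × ℝ) : proj (θ + π) c = -proj θ c := by
  simp only [proj, cos_add_pi, sin_add_pi]; ring

lemma hasDerivAt_proj (c : ℝ × ℝ) (θ : ℝ) :
    HasDerivAt (fun θ => proj θ c) (proj (θ + π / 2) c) θ := by
  simp only [proj, cos_add_pi_div_two, sin_add_pi_div_two]
  exact (((hasDerivAt_cos θ).const_mul c.1).add ((hasDerivAt_sin θ).const_mul c.2)).congr_deriv
    (by ring)

lemma isClosed_supportSet (g : ℝ → ℝ) : IsClosed (supportSet g) := by
  simp only [supportSet, ofPred_forall]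
  exact isClosed_iInter fun θ => isClosed_le (by unfold proj; fun_prop) continuous_const

lemma convex_supportSet (g : ℝ → ℝ) : Convex ℝ (supportSet g) := by
  intro x hx y hy a b ha hb hab θ
  rw [proj_add, proj_smul, proj_smul]
  calc a * proj θ x + b * proj θ y ≤ a * g θ + b * g θ := by gcongr; exacts [hx θ, hy θ]
    _ = g θ := by rw [← add_mul, hab, one_mul]

lemma supportSet_sub_proj (g : ℝ → ℝ) (c : ℝ × ℝ) :
    supportSet (fun θ => g θ - proj θ c) = (· + c) ⁻¹' supportSet g := by
  ext p
  simp only [supportSet, mem_ofPred_eq, mem_preimage, proj_add, le_sub_iff_add_le]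

lemma proj_boundaryPoint (g : ℝ → ℝ) (φ θ : ℝ) :
    proj φ (boundaryPoint g θ) = g θ * cos (θ - φ) - deriv g θ * sin (θ - φ) := by
  simp only [proj, boundaryPoint, cos_sub, sin_sub]; ring

lemma proj_boundaryPoint_self (g : ℝ → ℝ) (φ : ℝ) : proj φ (boundaryPoint g φ) = g φ := by
  simp [proj_boundaryPoint]

variable {g : ℝ → ℝ}

lemma zero_mem_supportSet (hg : ∀ θ, 0 ≤ g θ) : (0 : ℝ × ℝ) ∈ supportSet g :=
  fun θ => by simpa [proj] using hg θ

lemma exists_one_add_smul_mem_supportSet (hg : Continuous g)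
    (hper : Function.Periodic g (2 * π)) {y : ℝ × ℝ} (hy : ∀ φ, proj φ y < g φ) :
    ∃ η : ℝ, 0 < η ∧ (1 + η) • y ∈ supportSet g := by
  have hgap : Function.Periodic (fun φ => g φ - proj φ y) (2 * π) := fun φ => by
    simp only [proj, hper φ, cos_add_two_pi, sin_add_two_pi]
  obtain ⟨_, ⟨φ₀, rfl⟩, hmin⟩ := (hgap.compact_of_continuous two_pi_pos.ne'
    (hg.sub (continuous_proj y))).exists_isLeast (range_nonempty _)
  set ε := g φ₀ - proj φ₀ y
  have hε : 0 < ε := sub_pos.2 (hy φ₀)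
  set A := |y.1| + |y.2|
  refine ⟨ε / (A + 1), by positivity, fun φ => ?_⟩
  have hgapφ : ε ≤ g φ - proj φ y := hmin ⟨φ, rfl⟩
  have hsmall : ε / (A + 1) * proj φ y ≤ ε := calc
    ε / (A + 1) * proj φ y ≤ ε / (A + 1) * (A + 1) := by
      gcongr; linarith [le_abs_self (proj φ y), abs_proj_le φ y]
    _ = ε := div_mul_cancel₀ _ (by positivity)
  rw [proj_smul]
  linarith

lemma exists_maximal_smul_mem_supportSet {x : ℝ × ℝ} (hx : x ∈ supportSet g)
    (hx0 : x ≠ 0) : ∃ τ : ℝ, 1 ≤ τ ∧ τ • x ∈ supportSet g ∧ ∀ t, τ < t → t • x ∉ supportSet g := by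
  obtain ⟨φ, hφ⟩ := exists_proj_pos hx0
  set T := {t : ℝ | t • x ∈ supportSet g}
  have hbdd : BddAbove T := ⟨g φ / proj φ x, fun t ht =>
    (le_div_iff₀ hφ).2 (by simpa only [proj_smul] using ht φ)⟩
  have hclosed : IsClosed T := (isClosed_supportSet g).preimage (by fun_prop)
  have h1 : (1 : ℝ) ∈ T := by simpa [T] using hx
  exact ⟨sSup T, le_csSup hbdd h1, hclosed.csSup_mem ⟨1, h1⟩ hbdd,
    fun t ht hT => (le_csSup hbdd hT).not_gt ht⟩

lemma boundaryPoint_periodic (hper : Function.Periodic g (2 * π)) :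
    Function.Periodic (boundaryPoint g) (2 * π) := fun θ => by
  simp only [boundaryPoint, cos_add_two_pi, sin_add_two_pi, hper θ, hper.deriv θ]

lemma continuous_curvatureRadius (hg : ContDiff ℝ 2 g) : Continuous (curvatureRadius g) :=
  (ContDiff.iterate_deriv' 0 2 hg).continuous.add hg.continuous

lemma hasDerivAt_proj_boundaryPoint (hg : ContDiff ℝ 2 g) (φ θ : ℝ) :
    HasDerivAt (fun θ => proj φ (boundaryPoint g θ)) (-curvatureRadius g θ * sin (θ - φ)) θ := by
  simp only [proj_boundaryPoint]
  have hcos := ((hasDerivAt_id θ).sub_const φ).cos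
  have hsin := ((hasDerivAt_id θ).sub_const φ).sin
  refine (((hg.differentiable two_ne_zero θ).hasDerivAt.mul hcos).sub
    ((hg.differentiable_deriv_two θ).hasDerivAt.mul hsin)).congr_deriv ?_
  simp only [curvatureRadius, id]; ring

lemma monotoneOn_proj_boundaryPoint (hg : ContDiff ℝ 2 g) (hR : ∀ θ, 0 ≤ curvatureRadius g θ)
    (φ : ℝ) : MonotoneOn (fun θ => proj φ (boundaryPoint g θ)) (Icc (φ - π) φ) := by
  refine monotoneOn_of_hasDerivWithinAt_nonneg (convex_Icc _ _)
    (fun θ _ => (hasDerivAt_proj_boundaryPoint hg φ θ).continuousAt.continuousWithinAt)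
    (fun θ _ => (hasDerivAt_proj_boundaryPoint hg φ θ).hasDerivWithinAt) fun θ hθ => ?_
  rw [interior_Icc] at hθ
  have : sin (θ - φ) < 0 := sin_neg_of_neg_of_neg_pi_lt (by linarith [hθ.2]) (by linarith [hθ.1])
  nlinarith [hR θ]

lemma antitoneOn_proj_boundaryPoint (hg : ContDiff ℝ 2 g) (hR : ∀ θ, 0 ≤ curvatureRadius g θ)
    (φ : ℝ) : AntitoneOn (fun θ => proj φ (boundaryPoint g θ)) (Icc φ (φ + π)) := by
  refine antitoneOn_of_hasDerivWithinAt_nonpos (convex_Icc _ _)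
    (fun θ _ => (hasDerivAt_proj_boundaryPoint hg φ θ).continuousAt.continuousWithinAt)
    (fun θ _ => (hasDerivAt_proj_boundaryPoint hg φ θ).hasDerivWithinAt) fun θ hθ => ?_
  rw [interior_Icc] at hθ
  have : 0 < sin (θ - φ) := sin_pos_of_pos_of_lt_pi (by linarith [hθ.1]) (by linarith [hθ.2])
  nlinarith [hR θ]

lemma proj_boundaryPoint_le (hg : ContDiff ℝ 2 g) (hper : Function.Periodic g (2 * π))
    (hR : ∀ θ, 0 ≤ curvatureRadius g θ) (φ θ : ℝ) : proj φ (boundaryPoint g θ) ≤ g φ := by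
  obtain ⟨θ', hθ', hθθ'⟩ := ((boundaryPoint_periodic hper).comp (proj φ)).exists_mem_Ico
    two_pi_pos θ (φ - π)
  rw [show proj φ (boundaryPoint g θ) = _ from hθθ', ← proj_boundaryPoint_self g φ]
  rcases le_total θ' φ with h | h
  · exact monotoneOn_proj_boundaryPoint hg hR φ ⟨hθ'.1, h⟩ ⟨by linarith [pi_pos], le_rfl⟩ h
  · exact antitoneOn_proj_boundaryPoint hg hR φ ⟨le_rfl, by linarith [pi_pos]⟩
      ⟨h, by linarith [hθ'.2]⟩ h

lemma boundaryPoint_mem_supportSet (hg : ContDiff ℝ 2 g) (hper : Function.Periodic g (2 * π))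
    (hR : ∀ θ, 0 ≤ curvatureRadius g θ) (θ : ℝ) : boundaryPoint g θ ∈ supportSet g :=
  fun φ => proj_boundaryPoint_le hg hper hR φ θ

lemma proj_boundaryPoint_lt (hg : ContDiff ℝ 2 g) (hR : ∀ θ, 0 ≤ curvatureRadius g θ) {φ θ : ℝ}
    (hRφ : 0 < curvatureRadius g φ) (hθ : θ ∈ Ioc φ (φ + π)) :
    proj φ (boundaryPoint g θ) < g φ := by
  obtain ⟨u, hu, hRu⟩ := mem_nhdsGT_iff_exists_Ioo_subset.mp <| nhdsWithin_le_nhds <|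
    (continuous_curvatureRadius hg).continuousAt.eventually (lt_mem_nhds hRφ)
  set m := min θ u
  have hm : φ < m := lt_min hθ.1 hu
  have hstrict : StrictAntiOn (fun θ => proj φ (boundaryPoint g θ)) (Icc φ m) := by
    refine strictAntiOn_of_hasDerivWithinAt_neg (convex_Icc _ _)
      (fun θ _ => (hasDerivAt_proj_boundaryPoint hg φ θ).continuousAt.continuousWithinAt)
      (fun θ _ => (hasDerivAt_proj_boundaryPoint hg φ θ).hasDerivWithinAt) fun x hx => ?_
    rw [interior_Icc] at hx
    have hRx : 0 < curvatureRadius g x := hRu ⟨hx.1, hx.2.trans_le (min_le_right _ _)⟩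
    have : 0 < sin (x - φ) := sin_pos_of_pos_of_lt_pi (by linarith [hx.1])
      (by linarith [hx.2, min_le_left θ u, hθ.2])
    nlinarith
  calc proj φ (boundaryPoint g θ) ≤ proj φ (boundaryPoint g m) :=
        antitoneOn_proj_boundaryPoint hg hR φ ⟨hm.le, (min_le_left _ _).trans hθ.2⟩
          ⟨hθ.1.le, hθ.2⟩ (min_le_left _ _)
    _ < proj φ (boundaryPoint g φ) := hstrict ⟨le_rfl, hm.le⟩ ⟨hm.le, le_rfl⟩ hm
    _ = g φ := proj_boundaryPoint_self g φ

lemma boundaryPoint_injOn (hg : ContDiff ℝ 2 g) (hper : Function.Periodic g (2 * π))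
    (hR : ∀ θ, 0 ≤ curvatureRadius g θ) :
    InjOn (boundaryPoint g) {θ | θ ∈ Ico 0 (2 * π) ∧ 0 < curvatureRadius g θ} := by
  intro θ₁ h₁ θ₂ h₂ heq
  by_contra hne
  wlog hlt : θ₁ < θ₂ generalizing θ₁ θ₂
  · exact this h₂ h₁ heq.symm (Ne.symm hne) (lt_of_le_of_ne (not_lt.mp hlt) (Ne.symm hne))
  rcases le_or_gt (θ₂ - θ₁) π with hπ | hπ
  · have := proj_boundaryPoint_lt hg hR h₁.2 ⟨hlt, by linarith⟩
    rw [← heq, proj_boundaryPoint_self] at this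
    exact lt_irrefl _ this
  · have := proj_boundaryPoint_lt hg hR h₂.2 (θ := θ₁ + 2 * π)
      ⟨by linarith [h₂.1.2, h₁.1.1], by linarith⟩
    rw [boundaryPoint_periodic hper, heq, proj_boundaryPoint_self] at this
    exact lt_irrefl _ this

lemma eq_boundaryPoint_of_proj_eq {y : ℝ × ℝ} {φ : ℝ} (hg : DifferentiableAt ℝ g φ)
    (hy : y ∈ supportSet g) (hφ : proj φ y = g φ) : y = boundaryPoint g φ := by
  have hmax : IsLocalMax (fun ψ => proj ψ y - g ψ) φ :=
    Eventually.of_forall fun ψ => by simpa [hφ] using hy ψ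
  have h0 := hmax.hasDerivAt_eq_zero ((hasDerivAt_proj y φ).sub hg.hasDerivAt)
  simp only [proj, cos_add_pi_div_two, sin_add_pi_div_two] at hφ h0
  ext <;> simp only [boundaryPoint]
  · linear_combination cos φ * hφ - sin φ * h0 - y.1 * sin_sq_add_cos_sq φ
  · linear_combination sin φ * hφ + cos φ * h0 - y.2 * sin_sq_add_cos_sq φ

lemma hasDerivAt_boundaryPoint (hg : ContDiff ℝ 2 g) (θ : ℝ) :
    HasDerivAt (boundaryPoint g) (curvatureRadius g θ • (-sin θ, cos θ)) θ := by
  have h₁ := hasDerivAt_proj_boundaryPoint hg 0 θ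
  have h₂ := hasDerivAt_proj_boundaryPoint hg (π / 2) θ
  simp only [proj, cos_zero, sin_zero, cos_pi_div_two, sin_pi_div_two, sub_zero, mul_one,
    mul_zero, add_zero, zero_add, sin_sub_pi_div_two] at h₁ h₂
  convert h₁.prodMk h₂ using 1
  simp only [Prod.smul_mk, smul_eq_mul, Prod.mk.injEq]
  constructor <;> ring

lemma hasFDerivAt_polarMap (hg : ContDiff ℝ 2 g) (p : ℝ × ℝ) :
    HasFDerivAt (polarMap g) (polarMapDeriv g p) p := by
  refine (hasFDerivAt_fst.smul ((hasDerivAt_boundaryPoint hg p.2).hasFDerivAt.comp p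
    hasFDerivAt_snd)).congr_fderiv ?_
  ext <;> simp [polarMapDeriv]

lemma det_polarMapDeriv (p : ℝ × ℝ) :
    (polarMapDeriv g p).det = p.1 * (curvatureRadius g p.2 * g p.2) := by
  have hγ := proj_boundaryPoint_self g p.2
  rw [proj] at hγ
  rw [ContinuousLinearMap.det, LinearMap.det_prod_self]
  simp only [polarMapDeriv, Prod.smul_mk, smul_eq_mul, mul_neg, ContinuousLinearMap.toLinearMap_add,
    ContinuousLinearMap.toLinearMap_smul, ContinuousLinearMap.coe_smulRight,
    ContinuousLinearMap.coe_snd, ContinuousLinearMap.coe_fst, LinearMap.add_apply,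
    LinearMap.smul_apply, LinearMap.coe_smulRight, LinearMap.snd_apply, LinearMap.fst_apply,
    zero_smul, smul_zero, one_smul, zero_add, add_zero]
  linear_combination (p.1 * curvatureRadius g p.2) * hγ

lemma mem_polarMap_image (hg : ContDiff ℝ 2 g) (hper : Function.Periodic g (2 * π))
    {x : ℝ × ℝ} (hx : x ∈ supportSet g) (hx0 : x ≠ 0) :
    x ∈ polarMap g '' (Ioc 0 1 ×ˢ Ico 0 (2 * π)) := by
  obtain ⟨τ, hτ1, hτK, hτmax⟩ := exists_maximal_smul_mem_supportSet hx hx0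
  obtain ⟨φ, hφ⟩ : ∃ φ, proj φ (τ • x) = g φ := by
    by_contra! h
    obtain ⟨η, hη, hηK⟩ := exists_one_add_smul_mem_supportSet hg.continuous hper
      fun φ => (hτK φ).lt_of_ne (h φ)
    exact hτmax ((1 + η) * τ) (by nlinarith) (by rwa [mul_smul])
  obtain ⟨θ, hθ, hθφ⟩ := (boundaryPoint_periodic hper).exists_mem_Ico₀ two_pi_pos φ
  have hτ0 : 0 < τ := zero_lt_one.trans_le hτ1
  refine ⟨(τ⁻¹, θ), ⟨⟨inv_pos.2 hτ0, inv_le_one_of_one_le₀ hτ1⟩, hθ⟩, ?_⟩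
  rw [polarMap, ← hθφ, ← eq_boundaryPoint_of_proj_eq (hg.differentiable two_ne_zero φ) hτK hφ,
    smul_smul, inv_mul_cancel₀ hτ0.ne', one_smul]

lemma polarMap_image_subset (hg : ContDiff ℝ 2 g) (hper : Function.Periodic g (2 * π))
    (hR : ∀ θ, 0 ≤ curvatureRadius g θ) (hg0 : ∀ θ, 0 ≤ g θ) :
    polarMap g '' (Icc 0 1 ×ˢ univ) ⊆ supportSet g := by
  rintro _ ⟨p, ⟨hp, -⟩, rfl⟩
  exact (convex_supportSet g).smul_mem_of_zero_mem (zero_mem_supportSet hg0)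
    (boundaryPoint_mem_supportSet hg hper hR p.2) hp

lemma polarMap_injOn (hg : ContDiff ℝ 2 g) (hper : Function.Periodic g (2 * π))
    (hR : ∀ θ, 0 ≤ curvatureRadius g θ) :
    InjOn (polarMap g)
      {p | 0 < p.1 ∧ p.2 ∈ Ico 0 (2 * π) ∧ 0 < curvatureRadius g p.2 ∧ 0 < g p.2} := by
  rintro ⟨t₁, θ₁⟩ ⟨ht₁, hθ₁, hR₁, hg₁⟩ ⟨t₂, θ₂⟩ ⟨ht₂, hθ₂, hR₂, hg₂⟩ heq
  simp only [polarMap] at heq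
  have hproj : ∀ φ, t₁ * proj φ (boundaryPoint g θ₁) = t₂ * proj φ (boundaryPoint g θ₂) :=
    fun φ => by rw [← proj_smul, ← proj_smul, heq]
  have h₁₂ : t₁ ≤ t₂ := by
    have := hproj θ₁
    rw [proj_boundaryPoint_self] at this
    nlinarith [proj_boundaryPoint_le hg hper hR θ₁ θ₂]
  have h₂₁ : t₂ ≤ t₁ := by
    have := hproj θ₂
    rw [proj_boundaryPoint_self] at this
    nlinarith [proj_boundaryPoint_le hg hper hR θ₂ θ₁]
  obtain rfl : t₁ = t₂ := le_antisymm h₁₂ h₂₁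
  obtain rfl : θ₁ = θ₂ :=
    boundaryPoint_injOn hg hper hR ⟨hθ₁, hR₁⟩ ⟨hθ₂, hR₂⟩ (smul_right_injective _ ht₁.ne' heq)
  rfl

lemma volume_supportSet_eq_volume_polarMap_image (hg : ContDiff ℝ 2 g)
    (hper : Function.Periodic g (2 * π)) (hR : ∀ θ, 0 ≤ curvatureRadius g θ)
    (hg0 : ∀ θ, 0 ≤ g θ) :
    volume (supportSet g) = volume (polarMap g '' (Ioc 0 1 ×ˢ Ico 0 (2 * π))) := by
  refine le_antisymm ?_ (measure_mono ((image_mono (Set.prod_mono Ioc_subset_Icc_self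
    (subset_univ _))).trans (polarMap_image_subset hg hper hR hg0)))
  calc volume (supportSet g)
      ≤ volume (polarMap g '' (Ioc 0 1 ×ˢ Ico 0 (2 * π)) ∪ {0}) := measure_mono fun x hx =>
        (eq_or_ne x 0).elim Or.inr fun hx0 => Or.inl (mem_polarMap_image hg hper hx hx0)
    _ ≤ volume (polarMap g '' (Ioc 0 1 ×ˢ Ico 0 (2 * π))) + volume ({0} : Set (ℝ × ℝ)) :=
        measure_union_le _ _
    _ = volume (polarMap g '' (Ioc 0 1 ×ˢ Ico 0 (2 * π))) := by
        rw [measure_singleton, add_zero]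

-- `polarMap g` need not be injective on `s`, only on the part `s'` where its Jacobian is nonzero;
-- the change of variables inequality, which needs no injectivity, gives the other bound.
lemma volume_polarMap_image (hg : ContDiff ℝ 2 g) (hper : Function.Periodic g (2 * π))
    (hR : ∀ θ, 0 ≤ curvatureRadius g θ) (hg0 : ∀ θ, 0 ≤ g θ) :
    volume (polarMap g '' (Ioc 0 1 ×ˢ Ico 0 (2 * π))) =
      ∫⁻ p in Ioc 0 1 ×ˢ Ico 0 (2 * π), ENNReal.ofReal (p.1 * (curvatureRadius g p.2 * g p.2)) := by
  set s := Ioc (0 : ℝ) 1 ×ˢ Ico 0 (2 * π)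
  set B := {p : ℝ × ℝ | p.1 * (curvatureRadius g p.2 * g p.2) ≠ 0}
  set s' := s ∩ B
  have hs : MeasurableSet s := measurableSet_Ioc.prod measurableSet_Ico
  have hB : MeasurableSet B := (isOpen_ne_fun (continuous_fst.mul
    (((continuous_curvatureRadius hg).mul hg.continuous).comp continuous_snd))
    continuous_const).measurableSet
  have hderiv : ∀ t, ∀ p ∈ t, HasFDerivWithinAt (polarMap g) (polarMapDeriv g p) t p :=
    fun t p _ => (hasFDerivAt_polarMap hg p).hasFDerivWithinAt
  have hinj : InjOn (polarMap g) s' := (polarMap_injOn hg hper hR).mono fun p ⟨⟨ht, hθ⟩, hB⟩ => by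
    obtain ⟨-, hR0, hg0'⟩ : p.1 ≠ 0 ∧ curvatureRadius g p.2 ≠ 0 ∧ g p.2 ≠ 0 := by
      simpa [B, not_or] using hB
    exact ⟨ht.1, hθ, (hR p.2).lt_of_ne' hR0, (hg0 p.2).lt_of_ne' hg0'⟩
  have hlower : ∫⁻ p in s, ENNReal.ofReal |(polarMapDeriv g p).det| ≤ volume (polarMap g '' s) :=
    calc ∫⁻ p in s, ENNReal.ofReal |(polarMapDeriv g p).det|
        = ∫⁻ p in s', ENNReal.ofReal |(polarMapDeriv g p).det| := by
          rw [← lintegral_inter_add_sdiff _ s hB,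
            setLIntegral_eq_zero (hs.diff hB) fun p hp => ?_, add_zero]
          simp [det_polarMapDeriv, not_not.mp hp.2]
      _ = volume (polarMap g '' s') :=
          lintegral_abs_det_fderiv_eq_addHaar_image volume (hs.inter hB) (hderiv s') hinj
      _ ≤ volume (polarMap g '' s) := measure_mono (image_mono inter_subset_left)
  rw [le_antisymm (addHaar_image_le_lintegral_abs_det_fderiv volume hs (hderiv s)) hlower]
  refine setLIntegral_congr_fun hs fun p hp => ?_
  rw [det_polarMapDeriv, abs_of_nonneg (mul_nonneg hp.1.1.le (mul_nonneg (hR _) (hg0 _)))]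

theorem volume_supportSet_of_nonneg (hg : ContDiff ℝ 2 g) (hper : Function.Periodic g (2 * π))
    (hR : ∀ θ, 0 ≤ curvatureRadius g θ) (hg0 : ∀ θ, 0 ≤ g θ) :
    volume (supportSet g) =
      ENNReal.ofReal ((1 / 2) * ∫ θ in 0..2 * π, g θ * curvatureRadius g θ) := by
  rw [volume_supportSet_eq_volume_polarMap_image hg hper hR hg0,
    volume_polarMap_image hg hper hR hg0, setLIntegral_Ioc_prod_Ico_ofReal_mul
      (f := fun θ => curvatureRadius g θ * g θ) ((continuous_curvatureRadius hg).mul hg.continuous)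
      (fun θ => mul_nonneg (hR θ) (hg0 θ)) two_pi_pos.le]
  simp only [mul_comm (curvatureRadius g _)]

lemma curvatureRadius_sub_proj (hg : ContDiff ℝ 2 g) (c : ℝ × ℝ) :
    curvatureRadius (fun θ => g θ - proj θ c) = curvatureRadius g := by
  have h₁ : deriv (fun θ => g θ - proj θ c) = fun θ => deriv g θ - proj (θ + π / 2) c :=
    funext fun θ => ((hg.differentiable two_ne_zero θ).hasDerivAt.sub (hasDerivAt_proj c θ)).deriv
  have h₂ : deriv (fun θ => deriv g θ - proj (θ + π / 2) c) =
      fun θ => deriv (deriv g) θ + proj θ c := funext fun θ => by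
    rw [((hg.differentiable_deriv_two θ).hasDerivAt.fun_sub
      ((hasDerivAt_proj c (θ + π / 2)).comp_add_const θ (π / 2))).deriv, add_assoc, add_halves,
      proj_add_pi, sub_neg_eq_add]
  funext θ
  simp only [curvatureRadius, h₁, h₂]
  ring

lemma integral_proj_mul_curvatureRadius (hg : ContDiff ℝ 2 g) (hper : Function.Periodic g (2 * π))
    (c : ℝ × ℝ) : ∫ θ in 0..2 * π, proj θ c * curvatureRadius g θ = 0 := by
  set W := fun θ => proj θ c * deriv g θ - proj (θ + π / 2) c * g θ
  have hW : ∀ θ, HasDerivAt W (proj θ c * curvatureRadius g θ) θ := fun θ => by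
    have := ((hasDerivAt_proj c θ).mul (hg.differentiable_deriv_two θ).hasDerivAt).sub
      (((hasDerivAt_proj c (θ + π / 2)).comp_add_const θ (π / 2)).mul
        (hg.differentiable two_ne_zero θ).hasDerivAt)
    rw [add_assoc, add_halves, proj_add_pi] at this
    exact this.congr_deriv (by simp only [curvatureRadius]; ring)
  have hWper : Function.Periodic W (2 * π) :=
    ((proj_periodic c).mul hper.deriv).sub (((proj_periodic c).add_const (π / 2)).mul hper)
  rw [intervalIntegral.integral_eq_sub_of_hasDerivAt (fun θ _ => hW θ)
    (((continuous_proj c).mul (continuous_curvatureRadius hg)).intervalIntegrable _ _),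
    sub_eq_zero]
  simpa using hWper 0

theorem toReal_volume_supportSet (hg : ContDiff ℝ 2 g) (hper : Function.Periodic g (2 * π))
    (hR : ∀ θ, 0 ≤ curvatureRadius g θ) :
    (volume (supportSet g)).toReal = (1 / 2) * ∫ θ in 0..2 * π, g θ * curvatureRadius g θ := by
  set c := boundaryPoint g 0
  set g₀ := fun θ => g θ - proj θ c
  have hg₀ : ContDiff ℝ 2 g₀ := hg.sub (by unfold proj; fun_prop)
  have hR₀ : curvatureRadius g₀ = curvatureRadius g := curvatureRadius_sub_proj hg c
  have hg₀0 : ∀ θ, 0 ≤ g₀ θ := fun θ => sub_nonneg.2 (proj_boundaryPoint_le hg hper hR θ 0)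
  have hint : ∫ θ in 0..2 * π, g₀ θ * curvatureRadius g θ =
      ∫ θ in 0..2 * π, g θ * curvatureRadius g θ := by
    simp only [g₀, sub_mul]
    rw [intervalIntegral.integral_sub (f := fun θ => g θ * curvatureRadius g θ)
      (g := fun θ => proj θ c * curvatureRadius g θ)
      ((hg.continuous.mul (continuous_curvatureRadius hg)).intervalIntegrable _ _)
      (((continuous_proj c).mul (continuous_curvatureRadius hg)).intervalIntegrable _ _),
      integral_proj_mul_curvatureRadius hg hper c, sub_zero]
  rw [← measure_preimage_add_right volume c, ← supportSet_sub_proj,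
    volume_supportSet_of_nonneg hg₀ (hper.sub (proj_periodic c)) (hR₀ ▸ hR) hg₀0, hR₀,
    ENNReal.toReal_ofReal, hint]
  exact mul_nonneg (by norm_num) (intervalIntegral.integral_nonneg two_pi_pos.le
    fun θ _ => mul_nonneg (hg₀0 θ) (hR θ))

end SupportFunction

open SupportFunction in
lemma volume_setOf_inner_unitVec_le (g : ℝ → ℝ) :
    volume {x : EuclideanSpace ℝ (Fin 2) | ∀ θ, inner ℝ x (unitVec θ) ≤ g θ} =
      volume (supportSet g) := by
  set e := (MeasurableEquiv.toLp 2 (Fin 2 → ℝ)).symm.trans MeasurableEquiv.finTwoArrow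
  have he : MeasurePreserving e volume volume := (volume_preserving_finTwoArrow ℝ).comp
    (EuclideanSpace.volume_preserving_symm_measurableEquiv_toLp (Fin 2))
  have hpre : {x : EuclideanSpace ℝ (Fin 2) | ∀ θ, inner ℝ x (unitVec θ) ≤ g θ} =
      e ⁻¹' supportSet g := by
    ext x
    simp [e, supportSet, proj, unitVec, MeasurableEquiv.finTwoArrow, PiLp.inner_apply,
      Fin.sum_univ_two, mul_comm]
  rw [hpre, he.measure_preimage (isClosed_supportSet g).measurableSet.nullMeasurableSet]

/-- Cauchy's area formula: if `h` is a `C²`, `2π`-periodic function with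
`h'' + h ≥ 0`, and `K` is the convex body with support function `h`, then
`vol(K) = (1/2) ∫₀^{2π} h(θ)·(h''(θ) + h(θ)) dθ`. -/
theorem area_formula (h : ℝ → ℝ) (hsm : ContDiff ℝ 2 h)
    (hper : Function.Periodic h (2 * π))
    (hconv : ∀ θ : ℝ, 0 ≤ deriv (deriv h) θ + h θ)
    (K : Set (EuclideanSpace ℝ (Fin 2)))
    (hK : K = {x : EuclideanSpace ℝ (Fin 2) |
      ∀ θ : ℝ, (inner ℝ x (unitVec θ) : ℝ) ≤ h θ}) :
    (volume K).toReal =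
      (1 / 2) * ∫ θ in (0 : ℝ)..(2 * π), h θ * (deriv (deriv h) θ + h θ) := by
  rw [hK, volume_setOf_inner_unitVec_le, SupportFunction.toReal_volume_supportSet hsm hper hconv]
  rfl
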